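/- Lazy composition ⊗ : P_B C × P_A B → P_A C, defined by p ⊗ q = unfold χ (out p, out q), satisfies (identifying P with its unfolding via out): Ret(c, p_bc) ⊗ t_ab = Ret (c, p_bc ⊗ t_ab); (Rd φ) ⊗ Ret (b, p_ab) = φ b ⊗ p_ab; (Rd φ) ⊗ (Rd ψ) = Rd (λa. (Rd φ) ⊗ ψ a). -/

import Mathlib

universe u

/-- The initial algebra `T_A B = μX. B + X^A`: wellfounded trees branching over `A`
with leaves labelled in `B`. -/
inductive T (A : Type u) (B : Type u) : Type u
  | Ret : B → T A B
  | Rd : (A → T A B) → T A B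

namespace StreamProc

/-- `eat (Ret b) α = (b, α)`, `eat (Rd φ) (a ∷ α) = eat (φ a) α`. -/
def eat {A B : Type u} : T A B → Stream' A → B × Stream' A
  | .Ret b, α => (b, α)
  | .Rd φ, α => eat (φ α.head) α.tail

/-- `β` and `α` agree on their first `n` entries. -/
def Agree {A : Type u} (n : ℕ) (α β : Stream' A) : Prop :=
  ∀ i < n, α.get i = β.get i

/-- continuity of a discrete-valued function on streams (product topology of
the discrete topology, expressed concretely via prefixes). -/
def ContD {A B : Type u} (f : Stream' A → B) : Prop :=
  ∀ α, ∃ n, ∀ β, Agree n α β → f β = f α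

/-- continuity of a stream-valued function on streams. -/
def ContS {A B : Type u} (f : Stream' A → Stream' B) : Prop :=
  ∀ α n, ∃ m, ∀ β, Agree m α β → Agree n (f α) (f β)

/-- structural recursion (fold) on `T A B`. -/
def tfold {A B C : Type u} (r : B → C) (g : (A → C) → C) : T A B → C
  | .Ret b => r b
  | .Rd φ => g fun a => tfold r g (φ a)

/-- bind of the free (tree) monad `T_A`: grafting at leaves. -/
def tbind {A B C : Type u} : T A B → (B → T A C) → T A C
  | .Ret b, f => f b
  | .Rd φ, f => .Rd fun a => tbind (φ a) f

/-- bind of the state monad `M_A B = A^ω → B × A^ω`. -/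
def mbind {A B C : Type u} (m : Stream' A → B × Stream' A)
    (f : B → Stream' A → C × Stream' A) : Stream' A → C × Stream' A :=
  fun α => f (m α).1 (m α).2

/-- the type of leaf positions of a tree. -/
def LeafPos {A B : Type u} : T A B → Type u
  | .Ret _ => PUnit
  | .Rd φ => Σ a, LeafPos (φ a)

/-- the polynomial functor whose extension is `X ↦ T A (B × X)`. -/
def PF (A B : Type u) : PFunctor.{u} := ⟨T A B, LeafPos⟩

/-- `P_A B = νX. T_A (B × X)`, realised as an M-type. -/
def P (A B : Type u) : Type u := (PF A B).M

/-- repack a shape and leaf-labelling as a tree with decorated leaves. -/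
def decorate {A B X : Type u} : (t : T A B) → (LeafPos t → X) → T A (B × X)
  | .Ret b, f => .Ret (b, f PUnit.unit)
  | .Rd φ, f => .Rd fun a => decorate (φ a) fun l => f ⟨a, l⟩

/-- split a leaf-decorated tree into a shape and a leaf-labelling. -/
def splitT {A B X : Type u} : T A (B × X) → Σ t : T A B, LeafPos t → X
  | .Ret bx => ⟨.Ret bx.1, fun _ => bx.2⟩
  | .Rd φ => ⟨.Rd fun a => (splitT (φ a)).1, fun l => (splitT (φ l.1)).2 l.2⟩

/-- the structure map `out : P_A B → T_A (B × P_A B)` of the final coalgebra. -/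
def Pout {A B : Type u} (p : P A B) : T A (B × P A B) :=
  decorate (PFunctor.M.dest p).1 (PFunctor.M.dest p).2

/-- corecursion (unfold) into the final coalgebra `P_A B`. -/
def Punfold {A B X : Type u} (c : X → T A (B × X)) : X → P A B :=
  PFunctor.M.corec fun x => splitT (c x)

/-- `eat∞ : P_A B → A^ω → B^ω`: if `eat (out p) α = ((b, p'), α')` then
`eat∞ p α = b ∷ eat∞ p' α'`. -/
def eatInf {A B : Type u} (p : P A B) (α : Stream' A) : Stream' B :=
  Stream'.corec (fun s : P A B × Stream' A => (eat (Pout s.1) s.2).1.1)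
    (fun s => ((eat (Pout s.1) s.2).1.2, (eat (Pout s.1) s.2).2)) (p, α)

/-- the `fast-forward` map `ρ`. -/
def rho {A B C : Type u} : T A B → (Stream' A → C) → T A (B × (Stream' A → C))
  | .Ret b, f => .Ret (b, f)
  | .Rd φ, f => .Rd fun a => rho (φ a) fun α => f (Stream'.cons a α)

/-- `rep∞ = unfold (ρ ∘ τ)` where `τ f = (rep (head ∘ f), tail ∘ f)`. -/
def repInf {A B : Type u} (rep : (Stream' A → B) → T A B) :
    (Stream' A → Stream' B) → P A B :=
  Punfold fun f => rho (rep fun α => (f α).head) fun α => (f α).tail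

/-- the carrier of the composition coalgebras. -/
def S' (A B C : Type u) : Type u := T B (C × P B C) × T A (B × P A B)

/-- the `lazy' composition coalgebra `χ`, as a nested structural recursion
(outer fold on the postponent, inner fold on the preponent). -/
def chi {A B C : Type u} : T B (C × P B C) → T A (B × P A B) → T A (C × S' A B C) :=
  tfold
    (fun cp u => .Ret (cp.1, (Pout cp.2, u)))
    (fun f => tfold (fun bq => f bq.1 (Pout bq.2)) .Rd)

/-- the `greedy' composition coalgebra `χ'`. -/
def chi' {A B C : Type u} : T B (C × P B C) → T A (B × P A B) → T A (C × S' A B C) :=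
  tfold
    (fun cp => tfold (fun bq => .Ret (cp.1, (Pout cp.2, .Ret bq))) .Rd)
    (fun f => tfold (fun bq => f bq.1 (Pout bq.2)) .Rd)

/-- lazy composition on representatives (tree level). -/
def otimesT {A B C : Type u} (t : T B (C × P B C)) (u : T A (B × P A B)) : P A C :=
  Punfold (fun s : S' A B C => chi s.1 s.2) (t, u)

/-- lazy composition `⊗ : P_B C × P_A B → P_A C`. -/
def otimes {A B C : Type u} (p : P B C) (q : P A B) : P A C :=
  otimesT (Pout p) (Pout q)

/-- greedy composition on representatives (tree level). -/
def otimesT' {A B C : Type u} (t : T B (C × P B C)) (u : T A (B × P A B)) : P A C :=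
  Punfold (fun s : S' A B C => chi' s.1 s.2) (t, u)

/-- greedy composition `⊗' : P_B C × P_A B → P_A C`. -/
def otimes' {A B C : Type u} (p : P B C) (q : P A B) : P A C :=
  otimesT' (Pout p) (Pout q)

end StreamProc

/-! Unfolding satisfies `out ∘ unfold c = T(id × unfold c) ∘ c`, so each defining equation of `χ`
transfers to `⊗` by applying `T(id × ⊗)` to it. The second equation holds already before `out`:
`χ` sends both pairs to the same tree, and `unfold χ` only depends on that tree. -/

namespace StreamProc

section Unfold

variable {A B X Y : Type u}

def mapLeafSnd (f : X → Y) : T A (B × X) → T A (B × Y)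
  | .Ret bx => .Ret (bx.1, f bx.2)
  | .Rd φ => .Rd fun a => mapLeafSnd f (φ a)

theorem decorate_splitT (t : T A (B × X)) (f : X → Y) :
    decorate (splitT t).1 (f ∘ (splitT t).2) = mapLeafSnd f t := by
  induction t with
  | Ret bx => rfl
  | Rd φ ih => exact congrArg T.Rd (funext ih)

theorem Punfold_eq_mk (c : X → T A (B × X)) (x : X) :
    Punfold c x = PFunctor.M.mk ⟨(splitT (c x)).1, Punfold c ∘ (splitT (c x)).2⟩ :=
  PFunctor.M.corec_def _ x

theorem dest_Punfold (c : X → T A (B × X)) (x : X) :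
    PFunctor.M.dest (Punfold c x) = ⟨(splitT (c x)).1, Punfold c ∘ (splitT (c x)).2⟩ :=
  PFunctor.M.dest_corec _ x

theorem Pout_Punfold (c : X → T A (B × X)) (x : X) :
    Pout (Punfold c x) = mapLeafSnd (Punfold c) (c x) := by
  rw [Pout, dest_Punfold]
  exact decorate_splitT (c x) (Punfold c)

theorem Punfold_eq_of_eq {c : X → T A (B × X)} {x y : X} (h : c x = c y) :
    Punfold c x = Punfold c y := by
  rw [Punfold_eq_mk, Punfold_eq_mk c y, h]

end Unfold

section Chi

variable {A B C : Type u}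

theorem chi_ret (c : C) (p : P B C) (t : T A (B × P A B)) :
    chi (.Ret (c, p)) t = .Ret (c, (Pout p, t)) := rfl

theorem chi_rd_ret (φ : B → T B (C × P B C)) (b : B) (q : P A B) :
    chi (.Rd φ) (.Ret (b, q)) = chi (φ b) (Pout q) := rfl

theorem chi_rd_rd (φ : B → T B (C × P B C)) (ψ : A → T A (B × P A B)) :
    chi (.Rd φ) (.Rd ψ) = .Rd fun a => chi (.Rd φ) (ψ a) := rfl

theorem Pout_otimesT (t : T B (C × P B C)) (u : T A (B × P A B)) :
    Pout (otimesT t u) = mapLeafSnd (fun s => otimesT s.1 s.2) (chi t u) :=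
  Pout_Punfold _ (t, u)

end Chi

/-- Lazy composition `⊗` satisfies the equations of Lemma 4.1 (identifying
`P_A C` with its unfolding via `out`). -/
theorem stmt15 {A B C : Type u} :
    (∀ (c : C) (pbc : P B C) (t : T A (B × P A B)),
      Pout (otimesT (.Ret (c, pbc)) t) = .Ret (c, otimesT (Pout pbc) t)) ∧
    (∀ (φ : B → T B (C × P B C)) (b : B) (pab : P A B),
      otimesT (A := A) (.Rd φ) (.Ret (b, pab)) = otimesT (φ b) (Pout pab)) ∧
    (∀ (φ : B → T B (C × P B C)) (ψ : A → T A (B × P A B)),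
      Pout (otimesT (.Rd φ) (.Rd ψ)) =
        .Rd fun a => Pout (otimesT (.Rd φ) (ψ a))) := by
  refine ⟨fun c p t => ?_, fun φ b q => Punfold_eq_of_eq (chi_rd_ret φ b q), fun φ ψ => ?_⟩
  · rw [Pout_otimesT, chi_ret]
    rfl
  · simp only [Pout_otimesT, chi_rd_rd, mapLeafSnd]

end StreamProc
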